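/- arXiv:2208.03241 — 6 statements merged into one kernel-verified Lean document; each statement's English description precedes it below -/
import Mathlib

section
/- Let (X, w) be a weighted pure d-dimensional simplicial complex, let τ ∈ X(i), and let f ∈ C^{k+1}(X; ℝ) with i ≤ k ≤ d−1. Then the adjoint signless differential commutes with localization: (d_k^* f)_τ = d^*(f_τ), where the right-hand side is the adjoint signless differential of the link X_τ (taken with respect to the link weights w_τ) applied to the localization f_τ ∈ C^{k−i}(X_τ; ℝ). -/
/-!
Weighted pure simplicial complexes, links, cochains, signless differentials
and high dimensional random walk operators.

Conventions: faces are `Finset`s of vertices. A cochain "of dimension `k`"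
(an element of `C^k(X;ℝ)`) is represented by a function `Finset V → ℝ`
evaluated on faces of **cardinality** `c = k + 1`; all operators are indexed
by cardinality.
-/

open Finset

namespace HDRW

noncomputable section

variable {V : Type*} [DecidableEq V] [Fintype V]

/-- A weighted family of faces (the data of a weighted complex or of a link). -/
structure WFam (V : Type*) [DecidableEq V] [Fintype V] where
  faces : Finset (Finset V)
  w : Finset V → ℝ

namespace WFam

/-- The faces of cardinality `c` (i.e. of dimension `c - 1`). -/
def dimFaces (Y : WFam V) (c : ℕ) : Finset (Finset V) :=
  Y.faces.filter fun σ => σ.card = c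

/-- The link of a face `τ`, as a weighted family; the weights are
`w_τ(s) = w (s ∪ τ) / (C(|s| + |τ|, |τ|) * w τ)`. -/
def link (Y : WFam V) (τ : Finset V) : WFam V where
  faces := Finset.univ.powerset.filter fun s => Disjoint s τ ∧ s ∪ τ ∈ Y.faces
  w := fun s => Y.w (s ∪ τ) / (((s.card + τ.card).choose τ.card : ℝ) * Y.w τ)

/-- The inner product of two `c`-cochains: `⟨f, g⟩ = Σ_{σ} w σ * f σ * g σ`. -/
def inner (Y : WFam V) (c : ℕ) (f g : Finset V → ℝ) : ℝ :=
  ∑ σ ∈ Y.dimFaces c, Y.w σ * (f σ * g σ)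

/-- The squared norm `‖f‖² = ⟨f, f⟩` of a `c`-cochain. -/
def norm2 (Y : WFam V) (c : ℕ) (f : Finset V → ℝ) : ℝ := Y.inner c f f

end WFam

/-- The signless differential `d` from cochains on faces of cardinality `c`
(dimension `c-1`) to cochains on faces of cardinality `c+1`:
`(d f)(σ) = (1/(c+1)) Σ_{τ ⊆ σ, |τ| = c} f τ`. -/
def sDiff (c : ℕ) (f : Finset V → ℝ) : Finset V → ℝ :=
  fun σ => ((c : ℝ) + 1)⁻¹ * ∑ τ ∈ σ.powerset.filter (fun τ => τ.card = c), f τ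

/-- Iterated signless differential `C_a → C_{a+n}` (in cardinality indexing),
i.e. `d_{a+n-2} ⋯ d_{a-1}` in dimension indexing. -/
def sDiffIter (a : ℕ) : ℕ → (Finset V → ℝ) → (Finset V → ℝ)
  | 0, f => f
  | n + 1, f => sDiff (a + n) (sDiffIter a n f)

namespace WFam

/-- The adjoint `d^*` of the signless differential, from cochains on faces of
cardinality `c+1` to cochains on faces of cardinality `c`; it is given by the
explicit formula `(d^* f)(τ) = Σ_{σ ∈ X(c), τ ⊆ σ} w_τ(σ ∖ τ) * f σ` (a sum
over the cardinality-`(c+1)` faces containing `τ`). -/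
def sAdj (Y : WFam V) (c : ℕ) (f : Finset V → ℝ) : Finset V → ℝ :=
  fun τ => ∑ σ ∈ (Y.dimFaces (c + 1)).filter (fun σ => τ ⊆ σ),
    (Y.link τ).w (σ \ τ) * f σ

/-- Iterated adjoint of the signless differential, `C_{a+n} → C_a`
(in cardinality indexing), i.e. `d_{a-1}^* ⋯ d_{a+n-2}^*`. -/
def sAdjIter (Y : WFam V) : ℕ → ℕ → (Finset V → ℝ) → (Finset V → ℝ)
  | _, 0, f => f
  | a, n + 1, f => Y.sAdj a (sAdjIter Y (a + 1) n f)

/-- The non-lazy up-down random walk operator `M⁺` on cochains of cardinality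
`c` (dimension `k = c-1`): `(M⁺ f)(σ) = (1/(k+1)) Σ_{τ, σ ∪ τ ∈ X(k+1)} w_σ(τ∖σ) f τ`. -/
def nonLazy (Y : WFam V) (c : ℕ) (f : Finset V → ℝ) : Finset V → ℝ :=
  fun σ => (c : ℝ)⁻¹ *
    ∑ τ ∈ (Y.dimFaces c).filter (fun τ => σ ∪ τ ∈ Y.dimFaces (c + 1)),
      (Y.link σ).w (τ \ σ) * f τ

/-- The (lazy) up-down random walk operator `U` on cochains of cardinality `c`
(dimension `k = c-1`):
`(U f)(σ) = (1/(k+2)) f σ + (1/(k+2)) Σ_{τ, σ ∪ τ ∈ X(k+1)} w_σ(τ∖σ) f τ`. -/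
def upDown (Y : WFam V) (c : ℕ) (f : Finset V → ℝ) : Finset V → ℝ :=
  fun σ => ((c : ℝ) + 1)⁻¹ * f σ + ((c : ℝ) + 1)⁻¹ *
    ∑ τ ∈ (Y.dimFaces c).filter (fun τ => σ ∪ τ ∈ Y.dimFaces (c + 1)),
      (Y.link σ).w (τ \ σ) * f τ

/-- The down-up random walk operator `D` on cochains of cardinality `c`
(dimension `k = c-1`). -/
def downUp (Y : WFam V) (c : ℕ) (f : Finset V → ℝ) : Finset V → ℝ :=
  fun σ => (c : ℝ)⁻¹ *
      (∑ τ' ∈ σ.powerset.filter (fun τ' => τ'.card = c - 1), (Y.link τ').w (σ \ τ')) * f σ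
    + (c : ℝ)⁻¹ *
      ∑ τ ∈ (Y.dimFaces c).filter (fun τ => τ ≠ σ ∧ σ ∩ τ ∈ Y.dimFaces (c - 1)),
        (Y.link (σ ∩ τ)).w (τ \ σ) * f τ

/-- The `i`-down-up operator `D^i = d ⋯ d d^* ⋯ d^*` (going down `i+1` steps and
back up) on cochains of cardinality `c` (dimension `k = c-1`); in dimension
indexing this is `D_k^i = d_{k-1} ⋯ d_{k-i-1} d_{k-i-1}^* ⋯ d_{k-1}^*`. -/
def downUpIter (Y : WFam V) (c i : ℕ) (f : Finset V → ℝ) : Finset V → ℝ :=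
  sDiffIter (c - (i + 1)) (i + 1) (Y.sAdjIter (c - (i + 1)) (i + 1) f)

/-- `Y` (through its 1-skeleton) is a `γ`-(one sided) spectral expander:
every function on the vertices orthogonal to the constants has Rayleigh
quotient of the non-lazy random walk at most `γ` (Rayleigh characterization of
"the second largest eigenvalue of `M₀⁺` is at most `γ`"). -/
def isExpander (Y : WFam V) (γ : ℝ) : Prop :=
  ∀ f : Finset V → ℝ, Y.inner 1 f (fun _ => 1) = 0 →
    Y.inner 1 (Y.nonLazy 1 f) f ≤ γ * Y.norm2 1 f

/-- `Y` (through its 1-skeleton) is connected: the eigenvalue `1` of the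
non-lazy random walk `M₀⁺` has multiplicity one, i.e. every nonzero function on
the vertices orthogonal to the constants has Rayleigh quotient strictly
less than `1`. -/
def isConnected (Y : WFam V) : Prop :=
  ∀ f : Finset V → ℝ, Y.inner 1 f (fun _ => 1) = 0 → Y.norm2 1 f ≠ 0 →
    Y.inner 1 (Y.nonLazy 1 f) f < Y.norm2 1 f

/-- `f` is an `i`-level cochain of cardinality `c` (dimension `k = c-1`) with
respect to localization: for every face `σ` of cardinality `i` (i.e. of
dimension `i-1`), the localization `f_σ` is orthogonal to the constants in the
link `X_σ`. -/
def isLevel (Y : WFam V) (i c : ℕ) (f : Finset V → ℝ) : Prop :=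
  ∀ σ ∈ Y.dimFaces i,
    (Y.link σ).inner (c - i) (fun s => f (σ ∪ s)) (fun _ => 1) = 0

/-- `f` is a proper `i`-level cochain of cardinality `c`: it is an `i`-level
cochain which is in addition orthogonal to every `(i+1)`-level cochain. -/
def isProperLevel (Y : WFam V) (i c : ℕ) (f : Finset V → ℝ) : Prop :=
  Y.isLevel i c f ∧ ∀ g : Finset V → ℝ, Y.isLevel (i + 1) c g → Y.inner c f g = 0

end WFam

/-- The coboundary operator on oriented cochains (represented by their values
on the increasing ordering of each face, with respect to a linear order on the
vertices): `(δ f)(σ) = Σ_{j} (-1)^j f(σ ∖ {j-th smallest element of σ})`. -/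
def coboundary {V : Type*} [LinearOrder V] [Fintype V] (f : Finset V → ℝ) :
    Finset V → ℝ :=
  fun σ => ∑ v ∈ σ, (-1 : ℝ) ^ (σ.filter (fun u => u < v)).card * f (σ.erase v)

/-- A weighted pure `d`-dimensional simplicial complex: a downward closed
family of faces, each contained in a face of cardinality `d+1`
(dimension `d`), together with a weight function `w : X → (0, 1]` summing to
`1` on the top faces and satisfying the averaging recurrence on lower faces. -/
structure WSC (V : Type*) [DecidableEq V] [Fintype V] (d : ℕ) extends WFam V where
  empty_mem : ∅ ∈ faces
  down_closed : ∀ ⦃σ⦄, σ ∈ faces → ∀ ⦃τ⦄, τ ⊆ σ → τ ∈ faces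
  isPure : ∀ σ ∈ faces, ∃ σ' ∈ faces, σ ⊆ σ' ∧ σ'.card = d + 1
  w_pos : ∀ σ ∈ faces, 0 < w σ
  w_le_one : ∀ σ ∈ faces, w σ ≤ 1
  w_sum_top : ∑ σ ∈ faces.filter (fun σ => σ.card = d + 1), w σ = 1
  w_down : ∀ τ ∈ faces, τ.card ≤ d →
    w τ = (((d + 1).choose τ.card : ℝ))⁻¹ *
      ∑ σ ∈ faces.filter (fun σ => σ.card = d + 1 ∧ τ ⊆ σ), w σ

namespace WFam

@[simp]
theorem mem_link_faces (Y : WFam V) {τ u : Finset V} :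
    u ∈ (Y.link τ).faces ↔ Disjoint u τ ∧ u ∪ τ ∈ Y.faces := by
  simp [link]

theorem link_link_w (Y : WFam V) {τ s t : Finset V} (hsτ : Disjoint s τ) (hts : Disjoint t s)
    (hτ : Y.w τ ≠ 0) : ((Y.link τ).link s).w t = (Y.link (τ ∪ s)).w t := by
  -- the binomial factors match: `C(n, |τ| + |s|) C(|τ| + |s|, |τ|) = C(n, |τ|) C(n - |τ|, |s|)`
  have hchoose := Nat.choose_mul (n := #t + #s + #τ) (k := #s + #τ) (Nat.le_add_left #τ #s)
  rw [Nat.add_sub_cancel, Nat.add_sub_cancel] at hchoose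
  replace hchoose := congrArg (Nat.cast : ℕ → ℝ) hchoose
  push_cast at hchoose
  have hchoose_ne : ∀ n k : ℕ, k ≤ n → ((n.choose k : ℕ) : ℝ) ≠ 0 := fun n k h => by
    exact_mod_cast (Nat.choose_pos h).ne'
  simp only [link]
  rw [card_union_of_disjoint hts, card_union_of_disjoint hsτ.symm, union_assoc, union_comm s τ,
    add_comm #τ #s, ← add_assoc]
  rcases eq_or_ne (Y.w (τ ∪ s)) 0 with h0 | h0
  · -- both sides are `0`, through division by zero
    simp [h0]
  have := hchoose_ne (#t + #s + #τ) #τ (by omega)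
  have := hchoose_ne (#t + #s) #s (by omega)
  have := hchoose_ne (#t + #s + #τ) (#s + #τ) (by omega)
  have := hchoose_ne (#s + #τ) #τ (by omega)
  field_simp
  linear_combination Y.w (t ∪ (τ ∪ s)) * hchoose

theorem sAdj_union_eq_sAdj_link (Y : WFam V) {τ s : Finset V} (hsτ : Disjoint s τ)
    (hτ : Y.w τ ≠ 0) (m : ℕ) (f : Finset V → ℝ) :
    Y.sAdj (m + #τ) f (τ ∪ s) = (Y.link τ).sAdj m (fun u => f (τ ∪ u)) s := by
  unfold sAdj
  refine sum_bij' (fun σ _ => σ \ τ) (fun u _ => τ ∪ u) ?_ ?_ ?_ ?_ ?_ <;>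
    simp only [dimFaces, mem_filter, mem_link_faces, union_subset_iff, and_imp]
  · intro σ hσ hcard hτσ hsσ
    refine ⟨⟨⟨sdiff_disjoint, by rwa [sdiff_union_of_subset hτσ]⟩, ?_⟩,
      subset_sdiff.2 ⟨hsσ, hsτ⟩⟩
    rw [card_sdiff_of_subset hτσ]
    omega
  · intro u hud hu hcard hsu
    refine ⟨⟨by rwa [union_comm], ?_⟩, subset_union_left, hsu.trans subset_union_right⟩
    rw [card_union_of_disjoint hud.symm]
    omega
  · intro σ _ _ hτσ _
    exact union_sdiff_of_subset hτσ
  · intro u hud _ _ _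
    exact union_sdiff_cancel_left hud.symm
  · intro σ _ _ hτσ _
    rw [union_sdiff_of_subset hτσ, link_link_w Y hsτ sdiff_disjoint hτ, sdiff_sdiff, sup_eq_union]

end WFam

variable {d : ℕ}

theorem sAdj_localization_general (X : WSC V d) (a c : ℕ) (hac : a ≤ c)
    (τ : Finset V) (hτ : τ ∈ X.toWFam.dimFaces a) (f : Finset V → ℝ) :
    ∀ s ∈ (X.toWFam.link τ).dimFaces (c - a),
      X.toWFam.sAdj c f (τ ∪ s) =
        (X.toWFam.link τ).sAdj (c - a) (fun u => f (τ ∪ u)) s := by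
  intro s hs
  obtain ⟨hτX, rfl⟩ := mem_filter.1 hτ
  have hsτ : Disjoint s τ := (X.toWFam.mem_link_faces.1 (mem_filter.1 hs).1).1
  have := X.toWFam.sAdj_union_eq_sAdj_link hsτ (X.w_pos τ hτX).ne' (c - #τ) f
  rwa [Nat.sub_add_cancel hac] at this

/-- For `τ ∈ X(i)` and `f ∈ C^{k+1}(X;ℝ)` with `i ≤ k ≤ d-1`
(here `a = i + 1`, `c = k + 1`), the adjoint signless differential commutes
with localization: `(d_k^* f)_τ = d^*(f_τ)`, the right-hand side being the
adjoint signless differential of the link `X_τ` (with the link weights `w_τ`)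
applied to the localization `f_τ ∈ C^{k-i}(X_τ;ℝ)`. -/
theorem sAdj_localization (X : WSC V d) (a c : ℕ) (hac : a ≤ c) (hc : c ≤ d)
    (τ : Finset V) (hτ : τ ∈ X.toWFam.dimFaces a) (f : Finset V → ℝ) :
    ∀ s ∈ (X.toWFam.link τ).dimFaces (c - a),
      X.toWFam.sAdj c f (τ ∪ s) =
        (X.toWFam.link τ).sAdj (c - a) (fun u => f (τ ∪ u)) s :=
  sAdj_localization_general X a c hac τ hτ f

end

end HDRW
end

section
/- Let (X, w) be a weighted pure d-dimensional simplicial complex and let −1 ≤ i < j ≤ d. For every f ∈ C^j(X; ℝ) and every σ ∈ X(i), the repeated adjoint signless differential satisfies (d_i^* ⋯ d_{j−1}^* f)(σ) = Σ_{τ ∈ X_σ(j−i−1)} w_σ(τ) f_σ(τ), i.e. it is the w_σ-weighted average of the localization f_σ over the (j−i−1)-dimensional faces of the link X_σ. -/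
/-!
Weighted pure simplicial complexes, links, cochains, signless differentials
and high dimensional random walk operators.

Conventions: faces are `Finset`s of vertices. A cochain "of dimension `k`"
(an element of `C^k(X;ℝ)`) is represented by a function `Finset V → ℝ`
evaluated on faces of **cardinality** `c = k + 1`; all operators are indexed
by cardinality.
-/

open Finset

namespace HDRW

noncomputable section

variable {V : Type*} [DecidableEq V] [Fintype V]

variable {d : ℕ}

/-!
Both sides are averages over the cofaces `ρ ⊇ σ` of cardinality `a + n`, with weights
`w ρ / (C(a + n, a) · w σ)`: for the link side this is the substitution `ρ = σ ∪ τ`, and each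
`d^*` is such an average one level up. Composing `d^*` with an `n`-step average, a coface `ρ`
of cardinality `a + n + 1` is reached through exactly `n + 1` intermediate faces, the weights
of these faces cancel, and `(a + 1) · C(a + n + 1, a + 1) = (n + 1) · C(a + n + 1, a)` fixes
the normalisation.
-/

namespace WFam

def cofaces (Y : WFam V) (σ : Finset V) (c : ℕ) : Finset (Finset V) :=
  (Y.dimFaces c).filter (σ ⊆ ·)

theorem mem_cofaces {Y : WFam V} {σ ρ : Finset V} {c : ℕ} :
    ρ ∈ Y.cofaces σ c ↔ ρ ∈ Y.faces ∧ ρ.card = c ∧ σ ⊆ ρ := by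
  simp only [cofaces, dimFaces, mem_filter, and_assoc]

theorem cofaces_card_self {Y : WFam V} {σ : Finset V} (hσ : σ ∈ Y.faces) :
    Y.cofaces σ σ.card = {σ} := by
  ext ρ
  rw [mem_cofaces, mem_singleton]
  constructor
  · rintro ⟨-, hρc, hσρ⟩
    exact (eq_of_subset_of_card_le hσρ hρc.le).symm
  · rintro rfl
    exact ⟨hσ, rfl, subset_rfl⟩

theorem mem_link_dimFaces {Y : WFam V} {σ τ : Finset V} {n : ℕ} :
    τ ∈ (Y.link σ).dimFaces n ↔ Disjoint τ σ ∧ τ ∪ σ ∈ Y.faces ∧ τ.card = n := by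
  simp only [dimFaces, link, mem_filter, mem_powerset, subset_univ, true_and, and_assoc]

theorem sum_link_dimFaces_eq_sum_cofaces (Y : WFam V) (σ : Finset V) (n : ℕ)
    (g : Finset V → ℝ) :
    ∑ τ ∈ (Y.link σ).dimFaces n, (Y.link σ).w τ * g (σ ∪ τ) =
      ((σ.card + n).choose σ.card * Y.w σ)⁻¹ * ∑ ρ ∈ Y.cofaces σ (σ.card + n), Y.w ρ * g ρ := by
  rw [mul_sum]
  refine sum_nbij' (σ ∪ ·) (· \ σ) ?_ ?_ ?_ ?_ ?_
  · intro τ hτ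
    obtain ⟨hτσ, hτf, hτc⟩ := mem_link_dimFaces.mp hτ
    rw [mem_cofaces, union_comm, card_union_of_disjoint hτσ, hτc, add_comm]
    exact ⟨hτf, rfl, subset_union_right⟩
  · intro ρ hρ
    obtain ⟨hρf, hρc, hσρ⟩ := mem_cofaces.mp hρ
    rw [mem_link_dimFaces, sdiff_union_of_subset hσρ, card_sdiff_of_subset hσρ, hρc]
    exact ⟨sdiff_disjoint, hρf, by omega⟩
  · intro τ hτ
    exact union_sdiff_cancel_left (mem_link_dimFaces.mp hτ).1.symm
  · intro ρ hρ
    exact union_sdiff_of_subset (mem_cofaces.mp hρ).2.2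
  · intro τ hτ
    obtain ⟨hτσ, -, hτc⟩ := mem_link_dimFaces.mp hτ
    simp only [link]
    rw [union_comm, hτc, add_comm, div_eq_inv_mul, mul_assoc]

theorem sAdj_eq_sum_cofaces (Y : WFam V) (c : ℕ) (g : Finset V → ℝ) {σ : Finset V}
    (hσ : σ.card = c) :
    Y.sAdj c g σ = ((c + 1 : ℝ) * Y.w σ)⁻¹ * ∑ ρ ∈ Y.cofaces σ (c + 1), Y.w ρ * g ρ := by
  rw [mul_sum]
  refine sum_congr rfl fun ρ hρ => ?_
  obtain ⟨-, hρc, hσρ⟩ := mem_cofaces.mp hρ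
  simp only [link]
  rw [sdiff_union_of_subset hσρ, card_sdiff_of_subset hσρ, hρc, hσ, Nat.sub_add_cancel (by omega),
    Nat.choose_succ_self_right]
  push_cast
  ring

end WFam

namespace WSC

theorem sum_cofaces_cofaces (X : WSC V d) {M : Type*} [AddCommMonoid M] {σ : Finset V}
    {a m : ℕ} (hσ : σ.card = a) (F : Finset V → M) :
    ∑ σ' ∈ X.cofaces σ (a + 1), ∑ ρ ∈ X.cofaces σ' m, F ρ =
      ∑ ρ ∈ X.cofaces σ m, (m - a) • F ρ := by
  rw [sum_comm' (t' := X.cofaces σ m) (s' := fun ρ => (ρ.powersetCard (a + 1)).filter (σ ⊆ ·))]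
  · refine sum_congr rfl fun ρ hρ => ?_
    obtain ⟨-, hρc, hσρ⟩ := WFam.mem_cofaces.mp hρ
    rw [sum_const, card_filter_powersetCard_subset σ ρ (a + 1) hσρ (by omega), hσ, hρc,
      Nat.add_sub_cancel_left, Nat.choose_one_right]
  · intro σ' ρ
    simp only [WFam.mem_cofaces, mem_filter, mem_powersetCard]
    constructor
    · rintro ⟨⟨-, hσ'c, hσσ'⟩, hρf, hρc, hσ'ρ⟩
      exact ⟨⟨⟨hσ'ρ, hσ'c⟩, hσσ'⟩, hρf, hρc, hσσ'.trans hσ'ρ⟩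
    · rintro ⟨⟨⟨hσ'ρ, hσ'c⟩, hσσ'⟩, hρf, hρc, -⟩
      exact ⟨⟨X.down_closed hρf hσ'ρ, hσ'c, hσσ'⟩, hρf, hρc, hσ'ρ⟩

theorem sAdj_eq_sum_cofaces_of_eq_sum_cofaces (X : WSC V d) {a n : ℕ} {f g : Finset V → ℝ}
    {σ : Finset V} (hσ : σ.card = a)
    (hg : ∀ σ' ∈ X.cofaces σ (a + 1),
      g σ' = ((a + 1 + n).choose (a + 1) * X.w σ')⁻¹ *
        ∑ ρ ∈ X.cofaces σ' (a + 1 + n), X.w ρ * f ρ) :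
    X.sAdj a g σ =
      ((a + (n + 1)).choose a * X.w σ)⁻¹ * ∑ ρ ∈ X.cofaces σ (a + (n + 1)), X.w ρ * f ρ := by
  have hchoose : ((a + 1 + n).choose (a + 1) : ℝ) * (a + 1) = (a + (n + 1)).choose a * (n + 1) := by
    have := Nat.choose_succ_right_eq (a + 1 + n) a
    rw [show a + 1 + n - a = n + 1 by omega] at this
    rw [show a + (n + 1) = a + 1 + n by omega]
    exact_mod_cast this
  have hcoef : ((a + 1 : ℝ) * X.w σ)⁻¹ * ((a + 1 + n).choose (a + 1) : ℝ)⁻¹ * (n + 1) =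
      ((a + (n + 1)).choose a * X.w σ)⁻¹ := by
    calc ((a + 1 : ℝ) * X.w σ)⁻¹ * ((a + 1 + n).choose (a + 1) : ℝ)⁻¹ * (n + 1)
        = (((a + 1 + n).choose (a + 1) : ℝ) * (a + 1) * X.w σ)⁻¹ * (n + 1) := by
          simp only [mul_inv]; ring
      _ = ((a + (n + 1)).choose a * (n + 1) * X.w σ)⁻¹ * (n + 1) := by rw [hchoose]
      _ = ((a + (n + 1)).choose a * X.w σ)⁻¹ := by field_simp
  calc X.sAdj a g σ
      = ((a + 1 : ℝ) * X.w σ)⁻¹ * ∑ σ' ∈ X.cofaces σ (a + 1), X.w σ' * g σ' :=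
        X.sAdj_eq_sum_cofaces a g hσ
    _ = ((a + 1 : ℝ) * X.w σ)⁻¹ * ((a + 1 + n).choose (a + 1) : ℝ)⁻¹ *
          ∑ σ' ∈ X.cofaces σ (a + 1), ∑ ρ ∈ X.cofaces σ' (a + 1 + n), X.w ρ * f ρ := by
        rw [mul_assoc]
        congr 1
        rw [mul_sum]
        refine sum_congr rfl fun σ' hσ' => ?_
        rw [hg σ' hσ']
        field_simp [(X.w_pos σ' (WFam.mem_cofaces.mp hσ').1).ne']
    _ = ((a + 1 : ℝ) * X.w σ)⁻¹ * ((a + 1 + n).choose (a + 1) : ℝ)⁻¹ *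
          ∑ ρ ∈ X.cofaces σ (a + (n + 1)), (n + 1) • (X.w ρ * f ρ) := by
        rw [sum_cofaces_cofaces X hσ, show a + 1 + n = a + (n + 1) by omega,
          show a + (n + 1) - a = n + 1 by omega]
    _ = ((a + (n + 1)).choose a * X.w σ)⁻¹ * ∑ ρ ∈ X.cofaces σ (a + (n + 1)), X.w ρ * f ρ := by
        simp only [nsmul_eq_mul, ← mul_sum]
        push_cast
        rw [← mul_assoc, hcoef]

theorem sAdjIter_eq_sum_cofaces (X : WSC V d) (a n : ℕ) (f : Finset V → ℝ) {σ : Finset V}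
    (hσf : σ ∈ X.faces) (hσc : σ.card = a) :
    X.sAdjIter a n f σ =
      ((a + n).choose a * X.w σ)⁻¹ * ∑ ρ ∈ X.cofaces σ (a + n), X.w ρ * f ρ := by
  induction n generalizing a σ with
  | zero =>
    rw [add_zero, ← hσc, WFam.cofaces_card_self hσf, sum_singleton, Nat.choose_self, Nat.cast_one,
      one_mul, inv_mul_cancel_left₀ (X.w_pos σ hσf).ne']
    rfl
  | succ n ih =>
    exact X.sAdj_eq_sum_cofaces_of_eq_sum_cofaces hσc fun σ' hσ' =>
      ih (a + 1) (WFam.mem_cofaces.mp hσ').1 (WFam.mem_cofaces.mp hσ').2.1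

end WSC

theorem sAdjIter_explicit_general (X : WSC V d) (a n : ℕ)
    (f : Finset V → ℝ) (σ : Finset V) (hσ : σ ∈ X.toWFam.dimFaces a) :
    X.toWFam.sAdjIter a n f σ =
      ∑ τ ∈ (X.toWFam.link σ).dimFaces n, (X.toWFam.link σ).w τ * f (σ ∪ τ) := by
  obtain ⟨hσf, hσc⟩ := mem_filter.mp hσ
  rw [WFam.sum_link_dimFaces_eq_sum_cofaces, hσc]
  exact X.sAdjIter_eq_sum_cofaces a n f hσf hσc

/-- For `-1 ≤ i < j ≤ d` (here `a = i + 1`, `n = j - i ≥ 1`),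
for every `f ∈ C^j(X;ℝ)` and every `σ ∈ X(i)`:
`(d_i^* ⋯ d_{j-1}^* f)(σ) = Σ_{τ ∈ X_σ(j-i-1)} w_σ(τ) f_σ(τ)`, the
`w_σ`-weighted average of the localization `f_σ` over the `(j-i-1)`-faces of
the link `X_σ`. -/
theorem sAdjIter_explicit (X : WSC V d) (a n : ℕ) (hn : 1 ≤ n) (h : a + n ≤ d + 1)
    (f : Finset V → ℝ) (σ : Finset V) (hσ : σ ∈ X.toWFam.dimFaces a) :
    X.toWFam.sAdjIter a n f σ =
      ∑ τ ∈ (X.toWFam.link σ).dimFaces n, (X.toWFam.link σ).w τ * f (σ ∪ τ) :=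
  sAdjIter_explicit_general X a n f σ hσ

end

end HDRW
end

section
/- Let (X, w) be a weighted pure d-dimensional simplicial complex and let 1 ≤ i ≤ d. Then for every f ∈ C^0(X; ℝ), the i-up-down operator on 0-cochains satisfies U_0^i f = (1/(i+1)) f + (i/(i+1)) M_0^+ f; equivalently M_0^+ = ((i+1)/i) U_0^i − (1/i) I. -/
/-!
Weighted pure simplicial complexes, links, cochains, signless differentials
and high dimensional random walk operators.

Conventions: faces are `Finset`s of vertices. A cochain "of dimension `k`"
(an element of `C^k(X;ℝ)`) is represented by a function `Finset V → ℝ`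
evaluated on faces of **cardinality** `c = k + 1`; all operators are indexed
by cardinality.
-/

open Finset

namespace HDRW

noncomputable section

variable {V : Type*} [DecidableEq V] [Fintype V]

variable {d : ℕ}

/-!
The iterated differential and its adjoint have closed forms: `d^n f` at an `(a+n)`-set `σ` is
`C(a+n,a)⁻¹` times the sum of `f` over the `a`-subsets of `σ`, and `(d^*)^n g` at an `a`-face `τ`
is `(C(a+n,a) w τ)⁻¹` times the sum of `w σ * g σ` over the `(a+n)`-faces `σ ⊇ τ`. Both come from
double counting chains of faces, as does the weight identity
`∑_{σ ∈ X(c), τ ⊆ σ} w σ = C(c, |τ|) w τ`. At a vertex `v`, `U^i f` is therefore an average of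
vertex sums over the `(i+1)`-faces through `v`: `v` itself receives total weight `1/(i+1)`, and
a neighbour `u` receives `C(i+1,2) w(vu) / ((i+1)² w v)`, which is `i/(i+1)` times its weight
in `M⁺`.
-/

theorem card_filter_card_Icc {α : Type*} [DecidableEq α] {τ t : Finset α} (h : τ ⊆ t) {c : ℕ}
    (hc : τ.card ≤ c) :
    ((Icc τ t).filter fun σ => σ.card = c).card = (t.card - τ.card).choose (c - τ.card) := by
  have hdisj : ∀ u ∈ (t \ τ).powerset, Disjoint τ u := fun u hu =>
    disjoint_of_subset_right (mem_powerset.mp hu) disjoint_sdiff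
  rw [Icc_eq_image_powerset h, filter_image, card_image_of_injOn, ← card_sdiff_of_subset h,
    ← card_powersetCard, powersetCard_eq_filter]
  · refine congrArg card (filter_congr fun u hu => ?_)
    rw [card_union_of_disjoint (hdisj u hu)]
    omega
  · intro u hu u' hu' huu'
    have hu := hdisj u (mem_filter.mp hu).1
    have hu' := hdisj u' (mem_filter.mp hu').1
    rw [← union_sdiff_cancel_left hu, ← union_sdiff_cancel_left hu']
    exact congrArg (· \ τ) huu'

theorem sum_subset_sum_subset {α : Type*} [DecidableEq α] (σ : Finset α) {a b : ℕ} (hab : a ≤ b)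
    (f : Finset α → ℝ) :
    ∑ τ ∈ σ.powerset.filter (fun τ => τ.card = b),
        ∑ ρ ∈ τ.powerset.filter (fun ρ => ρ.card = a), f ρ
      = (σ.card - a).choose (b - a) * ∑ ρ ∈ σ.powerset.filter (fun ρ => ρ.card = a), f ρ := by
  rw [sum_comm' (s' := fun ρ => (Icc ρ σ).filter fun τ => τ.card = b)
    (t' := σ.powerset.filter fun ρ => ρ.card = a), mul_sum]
  · refine sum_congr rfl fun ρ hρ => ?_
    obtain ⟨hρσ, hρa⟩ := mem_filter.mp hρ
    rw [sum_const, card_filter_card_Icc (c := b) (mem_powerset.mp hρσ) (hρa ▸ hab), hρa,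
      nsmul_eq_mul]
  · intro τ ρ
    simp only [mem_filter, mem_powerset, mem_Icc]
    constructor
    · rintro ⟨⟨hτσ, hτb⟩, hρτ, hρa⟩
      exact ⟨⟨⟨hρτ, hτσ⟩, hτb⟩, hρτ.trans hτσ, hρa⟩
    · rintro ⟨⟨⟨hρτ, hτσ⟩, hτb⟩, -, hρa⟩
      exact ⟨⟨hτσ, hτb⟩, hρτ, hρa⟩

theorem card_union_eq_two_iff {α : Type*} [DecidableEq α] {v ρ : Finset α} (hv : v.card = 1)
    (hρ : ρ.card = 1) : (v ∪ ρ).card = 2 ↔ ρ ≠ v := by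
  obtain ⟨x, rfl⟩ := card_eq_one.mp hv
  obtain ⟨y, rfl⟩ := card_eq_one.mp hρ
  rw [← insert_eq, card_pair_eq_two_iff, Ne, Ne, singleton_inj, eq_comm]

theorem cast_choose_add_one_mul {a n : ℕ} :
    ((a + n + 1).choose a : ℝ) * (n + 1) = (a + n + 1) * (a + n).choose a := by
  have h := Nat.add_one_mul_choose_eq (a + n) n
  rw [← Nat.choose_symm_add, show a + n + 1 = a + (n + 1) by omega,
    ← Nat.choose_symm_add] at h
  rw [show a + n + 1 = a + (n + 1) by omega]
  exact_mod_cast h.symm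

theorem sDiffIter_apply {α : Type*} [DecidableEq α] (a n : ℕ) (f : Finset α → ℝ) {σ : Finset α}
    (hσ : σ.card = a + n) :
    sDiffIter a n f σ
      = ((a + n).choose a : ℝ)⁻¹ * ∑ ρ ∈ σ.powerset.filter (fun ρ => ρ.card = a), f ρ := by
  induction n generalizing σ with
  | zero =>
    rw [add_zero] at hσ ⊢
    rw [← powersetCard_eq_filter, ← hσ, powersetCard_self, sum_singleton, Nat.choose_self,
      Nat.cast_one, inv_one, one_mul]
    rfl
  | succ n ih =>
    have hterm : ∀ τ ∈ σ.powerset.filter (fun τ => τ.card = a + n),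
        sDiffIter a n f τ = ((a + n).choose a : ℝ)⁻¹ *
          ∑ ρ ∈ τ.powerset.filter (fun ρ => ρ.card = a), f ρ :=
      fun τ hτ => ih (mem_filter.mp hτ).2
    rw [sDiffIter, sDiff, sum_congr rfl hterm, ← mul_sum, sum_subset_sum_subset σ (by omega), hσ,
      show a + (n + 1) - a = n + 1 by omega, show a + n - a = n by omega,
      Nat.choose_succ_self_right]
    have hC : ((a + n).choose a : ℝ) ≠ 0 := Nat.cast_ne_zero.mpr (Nat.choose_pos (by omega)).ne'
    have hC' : ((a + n + 1).choose a : ℝ) ≠ 0 :=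
      Nat.cast_ne_zero.mpr (Nat.choose_pos (by omega)).ne'
    rw [← add_assoc]
    field_simp
    push_cast
    linear_combination (∑ ρ ∈ σ.powerset.filter (fun ρ => ρ.card = a), f ρ) *
      cast_choose_add_one_mul (a := a) (n := n)

theorem WFam.link_w_sdiff (Y : WFam V) {τ σ : Finset V} (h : τ ⊆ σ) :
    (Y.link τ).w (σ \ τ) = Y.w σ / (σ.card.choose τ.card * Y.w τ) := by
  simp only [WFam.link, sdiff_union_of_subset h, card_sdiff_add_card_eq_card h]

theorem WFam.nonLazy_one_apply (Y : WFam V) {v : Finset V} (hv : v.card = 1)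
    (f : Finset V → ℝ) :
    Y.nonLazy 1 f v = (2 * Y.w v)⁻¹ *
      ∑ ρ ∈ (Y.dimFaces 1).filter (fun ρ => v ∪ ρ ∈ Y.dimFaces 2), Y.w (v ∪ ρ) * f ρ := by
  rw [WFam.nonLazy, Nat.cast_one, inv_one, one_mul, mul_sum]
  refine sum_congr rfl fun ρ hρ => ?_
  have hcard : (v ∪ ρ).card = 2 := by
    simp only [WFam.dimFaces, mem_filter] at hρ
    exact hρ.2.2
  rw [← union_sdiff_left, Y.link_w_sdiff subset_union_left, hcard, hv]
  norm_num
  ring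

namespace WSC

variable (X : WSC V d)

theorem sum_superset_sum_superset {τ : Finset V} {b c : ℕ} (hτb : τ.card ≤ b)
    (g : Finset V → ℝ) :
    ∑ σ ∈ (X.dimFaces b).filter (fun σ => τ ⊆ σ),
        ∑ t ∈ (X.dimFaces c).filter (fun t => σ ⊆ t), g t
      = (c - τ.card).choose (b - τ.card) *
          ∑ t ∈ (X.dimFaces c).filter (fun t => τ ⊆ t), g t := by
  rw [sum_comm' (s' := fun t => (Icc τ t).filter fun σ => σ.card = b)
    (t' := (X.dimFaces c).filter fun t => τ ⊆ t), mul_sum]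
  · refine sum_congr rfl fun t ht => ?_
    simp only [WFam.dimFaces, mem_filter] at ht
    rw [sum_const, card_filter_card_Icc ht.2 hτb, ht.1.2, nsmul_eq_mul]
  · intro σ t
    simp only [WFam.dimFaces, mem_filter, mem_Icc]
    constructor
    · rintro ⟨⟨⟨-, hσb⟩, hτσ⟩, ⟨htF, htc⟩, hσt⟩
      exact ⟨⟨⟨hτσ, hσt⟩, hσb⟩, ⟨htF, htc⟩, hτσ.trans hσt⟩
    · rintro ⟨⟨⟨hτσ, hσt⟩, hσb⟩, ⟨htF, htc⟩, -⟩
      exact ⟨⟨⟨X.down_closed htF hσt, hσb⟩, hτσ⟩, ⟨htF, htc⟩, hσt⟩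

theorem sum_w_top_superset {τ : Finset V} (hτ : τ ∈ X.faces) :
    ∑ σ ∈ (X.dimFaces (d + 1)).filter (fun σ => τ ⊆ σ), X.w σ
      = (d + 1).choose τ.card * X.w τ := by
  rw [WFam.dimFaces, filter_filter]
  obtain ⟨σ, -, hτσ, hσ⟩ := X.isPure τ hτ
  rcases (card_le_card hτσ).lt_or_eq with hτd | hτd
  · have hC : ((d + 1).choose τ.card : ℝ) ≠ 0 :=
      Nat.cast_ne_zero.mpr (Nat.choose_pos (by omega)).ne'
    rw [X.w_down τ hτ (by omega), mul_inv_cancel_left₀ hC]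
  · have hsingle : X.faces.filter (fun σ => σ.card = d + 1 ∧ τ ⊆ σ) = {τ} := by
      ext σ
      simp only [mem_filter, mem_singleton]
      constructor
      · rintro ⟨-, hσ, hτσ⟩
        exact (eq_of_subset_of_card_le hτσ (by omega)).symm
      · rintro rfl
        exact ⟨hτ, by omega, subset_rfl⟩
    rw [hsingle, sum_singleton, hτd, hσ, Nat.choose_self, Nat.cast_one, one_mul]

theorem sum_w_superset {τ : Finset V} (hτ : τ ∈ X.faces) {c : ℕ} (hc : c ≤ d + 1) :
    ∑ σ ∈ (X.dimFaces c).filter (fun σ => τ ⊆ σ), X.w σ = c.choose τ.card * X.w τ := by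
  rcases lt_or_ge c τ.card with hcτ | hτc
  · rw [Nat.choose_eq_zero_of_lt hcτ, Nat.cast_zero, zero_mul, sum_eq_zero]
    intro σ hσ
    simp only [WFam.dimFaces, mem_filter] at hσ
    exact absurd (card_le_card hσ.2) (by omega)
  have hC : ((d + 1).choose c : ℝ) ≠ 0 := Nat.cast_ne_zero.mpr (Nat.choose_pos hc).ne'
  have hw : ∀ σ ∈ (X.dimFaces c).filter (fun σ => τ ⊆ σ), X.w σ
      = ((d + 1).choose c : ℝ)⁻¹ *
          ∑ t ∈ (X.dimFaces (d + 1)).filter (fun t => σ ⊆ t), X.w t := by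
    intro σ hσ
    simp only [WFam.dimFaces, mem_filter] at hσ
    rw [X.sum_w_top_superset hσ.1.1, hσ.1.2, inv_mul_cancel_left₀ hC]
  have hchoose : ((d + 1).choose τ.card : ℝ) * (d + 1 - τ.card).choose (c - τ.card)
      = (d + 1).choose c * c.choose τ.card := by
    exact_mod_cast (Nat.choose_mul hτc).symm
  rw [sum_congr rfl hw, ← mul_sum, X.sum_superset_sum_superset hτc, X.sum_w_top_superset hτ]
  field_simp
  linear_combination X.w τ * hchoose

theorem sAdjIter_apply (n : ℕ) {a : ℕ} (g : Finset V → ℝ) {τ : Finset V} (hτ : τ ∈ X.faces)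
    (hτa : τ.card = a) :
    X.sAdjIter a n g τ = ((a + n).choose a * X.w τ)⁻¹ *
      ∑ σ ∈ (X.dimFaces (a + n)).filter (fun σ => τ ⊆ σ), X.w σ * g σ := by
  induction n generalizing a τ with
  | zero =>
    have hsingle : (X.dimFaces (a + 0)).filter (fun σ => τ ⊆ σ) = {τ} := by
      ext σ
      simp only [WFam.dimFaces, mem_filter, mem_singleton]
      constructor
      · rintro ⟨⟨-, hσ⟩, hτσ⟩
        exact (eq_of_subset_of_card_le hτσ (by omega)).symm
      · rintro rfl
        exact ⟨⟨hτ, hτa⟩, subset_rfl⟩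
    rw [hsingle, sum_singleton, add_zero, Nat.choose_self, Nat.cast_one, one_mul,
      inv_mul_cancel_left₀ (X.w_pos τ hτ).ne']
    rfl
  | succ n ih =>
    have hterm : ∀ σ ∈ (X.dimFaces (a + 1)).filter (fun σ => τ ⊆ σ),
        (X.link τ).w (σ \ τ) * X.sAdjIter (a + 1) n g σ
          = ((a + 1) * (a + 1 + n).choose (a + 1) * X.w τ)⁻¹ *
              ∑ t ∈ (X.dimFaces (a + 1 + n)).filter (fun t => σ ⊆ t), X.w t * g t := by
      intro σ hσ
      simp only [WFam.dimFaces, mem_filter] at hσ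
      obtain ⟨⟨hσF, hσa⟩, hτσ⟩ := hσ
      have hwσ := (X.w_pos σ hσF).ne'
      rw [X.link_w_sdiff hτσ, ih hσF hσa, hσa, hτa, Nat.choose_succ_self_right]
      field_simp
      push_cast
      ring
    rw [WFam.sAdjIter, WFam.sAdj, sum_congr rfl hterm, ← mul_sum,
      X.sum_superset_sum_superset (by omega), hτa, show a + 1 + n = a + (n + 1) by omega,
      show a + (n + 1) - a = n + 1 by omega, show a + 1 - a = 1 by omega, Nat.choose_one_right,
      ← mul_assoc]
    congr 1
    have hC : ((a + (n + 1)).choose a : ℝ) ≠ 0 :=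
      Nat.cast_ne_zero.mpr (Nat.choose_pos (by omega)).ne'
    have hC' : ((a + (n + 1)).choose (a + 1) : ℝ) ≠ 0 :=
      Nat.cast_ne_zero.mpr (Nat.choose_pos (by omega)).ne'
    have hwτ := (X.w_pos τ hτ).ne'
    have hchoose :
        ((a + (n + 1)).choose (a + 1) : ℝ) * (a + 1) = (a + (n + 1)).choose a * (n + 1) := by
      have h := Nat.choose_succ_right_eq (a + (n + 1)) a
      rw [show a + (n + 1) - a = n + 1 by omega] at h
      exact_mod_cast h
    push_cast
    field_simp
    linear_combination -hchoose

theorem sum_superset_sum_erase {v : Finset V} (hv : v.card = 1) (c : ℕ)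
    (h : Finset V → Finset V → ℝ) :
    ∑ σ ∈ (X.dimFaces c).filter (fun σ => v ⊆ σ),
        ∑ ρ ∈ (σ.powerset.filter fun ρ => ρ.card = 1).erase v, h σ ρ
      = ∑ ρ ∈ (X.dimFaces 1).filter (fun ρ => v ∪ ρ ∈ X.dimFaces 2),
          ∑ σ ∈ (X.dimFaces c).filter (fun σ => v ∪ ρ ⊆ σ), h σ ρ := by
  refine sum_comm' fun σ ρ => ?_
  simp only [WFam.dimFaces, mem_filter, mem_erase, mem_powerset, union_subset_iff]
  constructor
  · rintro ⟨⟨hσ, hvσ⟩, hρv, hρσ, hρ⟩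
    exact ⟨⟨hσ, hvσ, hρσ⟩, ⟨X.down_closed hσ.1 hρσ, hρ⟩,
      X.down_closed hσ.1 (union_subset hvσ hρσ), (card_union_eq_two_iff hv hρ).mpr hρv⟩
  · rintro ⟨⟨hσ, hvσ, hρσ⟩, ⟨-, hρ⟩, -, hvρ⟩
    exact ⟨⟨hσ, hvσ⟩, (card_union_eq_two_iff hv hρ).mp hvρ, hρσ, hρ⟩

end WSC

theorem upDownIter_eq_nonLazy_general (X : WSC V d) (i : ℕ) (hid : i ≤ d)
    (f : Finset V → ℝ) :
    ∀ v ∈ X.toWFam.dimFaces 1,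
      X.toWFam.sAdjIter 1 i (sDiffIter 1 i f) v =
        ((i : ℝ) + 1)⁻¹ * f v + ((i : ℝ) / ((i : ℝ) + 1)) * X.toWFam.nonLazy 1 f v := by
  intro v hv
  obtain ⟨hvF, hv1⟩ := mem_filter.mp hv
  have hsplit : ∀ σ ∈ (X.dimFaces (1 + i)).filter (fun σ => v ⊆ σ),
      X.w σ * sDiffIter 1 i f σ = ((1 + i : ℕ) : ℝ)⁻¹ * (X.w σ * f v +
        ∑ ρ ∈ (σ.powerset.filter fun ρ => ρ.card = 1).erase v, X.w σ * f ρ) := by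
    intro σ hσ
    simp only [WFam.dimFaces, mem_filter] at hσ
    have hvσ : v ∈ σ.powerset.filter fun ρ => ρ.card = 1 :=
      mem_filter.mpr ⟨mem_powerset.mpr hσ.2, hv1⟩
    rw [sDiffIter_apply 1 i f hσ.1.2, ← add_sum_erase _ _ hvσ, Nat.choose_one_right, ← mul_sum]
    ring
  have hedge : ∀ ρ ∈ (X.dimFaces 1).filter (fun ρ => v ∪ ρ ∈ X.dimFaces 2),
      ∑ σ ∈ (X.dimFaces (1 + i)).filter (fun σ => v ∪ ρ ⊆ σ), X.w σ * f ρ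
        = (1 + i).choose 2 * (X.w (v ∪ ρ) * f ρ) := by
    intro ρ hρ
    simp only [WFam.dimFaces, mem_filter] at hρ
    rw [← sum_mul, X.sum_w_superset hρ.2.1 (by omega), hρ.2.2, mul_assoc]
  rw [X.sAdjIter_apply i _ hvF hv1, sum_congr rfl hsplit, ← mul_sum, sum_add_distrib, ← sum_mul,
    X.sum_w_superset hvF (by omega), X.sum_superset_sum_erase hv1, sum_congr rfl hedge, ← mul_sum,
    X.nonLazy_one_apply hv1, hv1, Nat.choose_one_right, Nat.cast_choose_two]
  have hwv := (X.w_pos v hvF).ne'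
  field_simp
  push_cast
  ring

/-- For `1 ≤ i ≤ d` and every `f ∈ C^0(X;ℝ)`, the `i`-up-down
operator on `0`-cochains satisfies
`U_0^i f = (1/(i+1)) f + (i/(i+1)) M_0^+ f` (equivalently
`M_0^+ = ((i+1)/i) U_0^i - (1/i) I`), where
`U_0^i = d_0^* ⋯ d_{i-1}^* d_{i-1} ⋯ d_0`. -/
theorem upDownIter_eq_nonLazy (X : WSC V d) (i : ℕ) (hi1 : 1 ≤ i) (hid : i ≤ d)
    (f : Finset V → ℝ) :
    ∀ v ∈ X.toWFam.dimFaces 1,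
      X.toWFam.sAdjIter 1 i (sDiffIter 1 i f) v =
        ((i : ℝ) + 1)⁻¹ * f v + ((i : ℝ) / ((i : ℝ) + 1)) * X.toWFam.nonLazy 1 f v :=
  upDownIter_eq_nonLazy_general X i hid f

end

end HDRW
end

section
/- Let (X, w) be a weighted pure d-dimensional simplicial complex and let 0 ≤ i ≤ k ≤ d. Then for all f, g ∈ C^k(X; ℝ): ⟨f, g⟩ = Σ_{σ ∈ X(i)} w(σ) ⟨f_σ, g_σ⟩_{X_σ}, where ⟨·,·⟩_{X_σ} is the inner product of C^{k−i−1}(X_σ; ℝ) taken with respect to the link weights w_σ (i.e. the global inner product is the w-expectation over σ ∈ X(i) of the local inner products of the localizations). -/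
/-!
Weighted pure simplicial complexes, links, cochains, signless differentials
and high dimensional random walk operators.

Conventions: faces are `Finset`s of vertices. A cochain "of dimension `k`"
(an element of `C^k(X;ℝ)`) is represented by a function `Finset V → ℝ`
evaluated on faces of **cardinality** `c = k + 1`; all operators are indexed
by cardinality.
-/

open Finset

namespace HDRW

noncomputable section

variable {V : Type*} [DecidableEq V] [Fintype V]

variable {d : ℕ}

/-- For `0 ≤ i ≤ k ≤ d` (here `a = i + 1`, `c = k + 1`) and all
`f, g ∈ C^k(X;ℝ)`:
`⟨f, g⟩ = Σ_{σ ∈ X(i)} w σ ⟨f_σ, g_σ⟩_{X_σ}`, the global inner product being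
the `w`-expectation over `σ ∈ X(i)` of the local inner products of the
localizations (taken with respect to the link weights `w_σ`). -/
theorem inner_eq_sum_localization (X : WSC V d) (a c : ℕ) (ha : 1 ≤ a) (hac : a ≤ c)
    (hc : c ≤ d + 1) (f g : Finset V → ℝ) :
    X.toWFam.inner c f g =
      ∑ σ ∈ X.toWFam.dimFaces a,
        X.toWFam.w σ * (X.toWFam.link σ).inner (c - a)
          (fun s => f (σ ∪ s)) (fun s => g (σ ∪ s)) := by
  classical
  have hchpos : 0 < c.choose a := Nat.choose_pos hac
  have hch : ((c.choose a : ℝ)) ≠ 0 := by exact_mod_cast hchpos.ne'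
  -- Rewrite each local inner product as a plain sum
  have hR : ∀ σ ∈ X.toWFam.dimFaces a,
      X.toWFam.w σ * (X.toWFam.link σ).inner (c - a)
        (fun s => f (σ ∪ s)) (fun s => g (σ ∪ s))
      = ∑ s ∈ (X.toWFam.link σ).dimFaces (c - a),
          (c.choose a : ℝ)⁻¹ * (X.toWFam.w (σ ∪ s) * (f (σ ∪ s) * g (σ ∪ s))) := by
    intro σ hσ
    obtain ⟨hσf, hσc⟩ := Finset.mem_filter.mp hσ
    rw [WFam.inner, Finset.mul_sum]
    refine Finset.sum_congr rfl fun s hs => ?_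
    have hscard : s.card = c - a := (Finset.mem_filter.mp hs).2
    have hcc : s.card + σ.card = c := by omega
    have hw : X.toWFam.w σ ≠ 0 := ne_of_gt (X.w_pos σ hσf)
    show X.toWFam.w σ * (X.toWFam.w (s ∪ σ) /
        (((s.card + σ.card).choose σ.card : ℝ) * X.toWFam.w σ) * (f (σ ∪ s) * g (σ ∪ s))) = _
    rw [hcc, hσc, Finset.union_comm s σ]
    field_simp
  rw [Finset.sum_congr rfl hR]
  -- Rewrite the global inner product, expanding over subsets of size a
  have hL : ∀ τ ∈ X.toWFam.dimFaces c,
      X.toWFam.w τ * (f τ * g τ)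
      = ∑ _σ ∈ τ.powersetCard a,
          (c.choose a : ℝ)⁻¹ * (X.toWFam.w τ * (f τ * g τ)) := by
    intro τ hτ
    have hτc : τ.card = c := (Finset.mem_filter.mp hτ).2
    rw [Finset.sum_const, Finset.card_powersetCard, hτc, nsmul_eq_mul]
    field_simp
  rw [WFam.inner, Finset.sum_congr rfl hL]
  rw [Finset.sum_sigma', Finset.sum_sigma']
  refine Finset.sum_nbij' (fun p => ⟨p.2, p.1 \ p.2⟩) (fun p => ⟨p.1 ∪ p.2, p.1⟩)
    ?_ ?_ ?_ ?_ ?_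
  · rintro ⟨τ, σ⟩ hp
    simp only [Finset.mem_sigma] at hp ⊢
    obtain ⟨hτ, hσ⟩ := hp
    obtain ⟨hτf, hτc⟩ := Finset.mem_filter.mp hτ
    obtain ⟨hσsub, hσc⟩ := Finset.mem_powersetCard.mp hσ
    constructor
    · exact Finset.mem_filter.mpr ⟨X.down_closed hτf hσsub, hσc⟩
    · refine Finset.mem_filter.mpr ⟨Finset.mem_filter.mpr
        ⟨Finset.mem_powerset.mpr (Finset.subset_univ _), Finset.sdiff_disjoint, ?_⟩, ?_⟩
      · rwa [Finset.sdiff_union_of_subset hσsub]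
      · rw [Finset.card_sdiff_of_subset hσsub, hτc, hσc]
  · rintro ⟨σ, s⟩ hp
    simp only [Finset.mem_sigma] at hp ⊢
    obtain ⟨hσ, hs⟩ := hp
    obtain ⟨hσf, hσc⟩ := Finset.mem_filter.mp hσ
    have hscard : s.card = c - a := (Finset.mem_filter.mp hs).2
    obtain ⟨-, hdisj, hmem⟩ := Finset.mem_filter.mp (Finset.mem_filter.mp hs).1
    constructor
    · refine Finset.mem_filter.mpr ⟨by rwa [Finset.union_comm], ?_⟩
      rw [Finset.card_union_of_disjoint (Finset.disjoint_left.mpr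
        fun x hx hy => (Finset.disjoint_left.mp hdisj) hy hx), hσc, hscard]
      omega
    · exact Finset.mem_powersetCard.mpr ⟨Finset.subset_union_left, hσc⟩
  · rintro ⟨τ, σ⟩ hp
    simp only [Finset.mem_sigma] at hp
    obtain ⟨hτ, hσ⟩ := hp
    obtain ⟨hσsub, -⟩ := Finset.mem_powersetCard.mp hσ
    simp [Finset.union_sdiff_of_subset hσsub]
  · rintro ⟨σ, s⟩ hp
    simp only [Finset.mem_sigma] at hp
    obtain ⟨hσ, hs⟩ := hp
    have hdisj : Disjoint s σ := (Finset.mem_filter.mp (Finset.mem_filter.mp hs).1).2.1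
    have hdisj' : Disjoint σ s := Finset.disjoint_left.mpr
      fun x hx hy => (Finset.disjoint_left.mp hdisj) hy hx
    simp [Finset.union_sdiff_cancel_left hdisj']
  · rintro ⟨τ, σ⟩ hp
    simp only [Finset.mem_sigma] at hp
    obtain ⟨hτ, hσ⟩ := hp
    obtain ⟨hσsub, -⟩ := Finset.mem_powersetCard.mp hσ
    simp [Finset.union_sdiff_of_subset hσsub]

end

end HDRW
end

section
/- Let (X, w) be a weighted pure d-dimensional simplicial complex and let 0 ≤ j ≤ i ≤ k ≤ d. Then every i-level k-cochain (with respect to localization) is also a j-level k-cochain: if f ∈ C^k(X; ℝ) satisfies ⟨f_σ, 1⟩_{X_σ} = 0 for every σ ∈ X(i−1), then ⟨f_σ, 1⟩_{X_σ} = 0 for every σ ∈ X(j−1). -/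
/-!
Weighted pure simplicial complexes, links, cochains, signless differentials
and high dimensional random walk operators.

Conventions: faces are `Finset`s of vertices. A cochain "of dimension `k`"
(an element of `C^k(X;ℝ)`) is represented by a function `Finset V → ℝ`
evaluated on faces of **cardinality** `c = k + 1`; all operators are indexed
by cardinality.
-/

open Finset

namespace HDRW

noncomputable section

variable {V : Type*} [DecidableEq V] [Fintype V]

variable {d : ℕ}

/-!
Up to the positive factor `C(k+1, |σ|) w(σ)`, the pairing `⟨f_σ, 1⟩` is the star sum
`S(σ) = Σ_{τ ∈ X(k), σ ⊆ τ} w(τ) f(τ)`. Summing `S` over the `i`-element faces `ρ ⊇ σ` counts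
every `τ ⊇ σ` exactly `C(k+1-j, i-j)` times, so if `S` vanishes on `X(i-1)` it vanishes
on `X(j-1)`.
-/

namespace WFam

def starSum (Y : WFam V) (c : ℕ) (f : Finset V → ℝ) (σ : Finset V) : ℝ :=
  ∑ τ ∈ (Y.dimFaces c).filter (σ ⊆ ·), Y.w τ * f τ

lemma link_inner_one (Y : WFam V) (c : ℕ) (f : Finset V → ℝ) (σ : Finset V) :
    (Y.link σ).inner c (fun s => f (σ ∪ s)) (fun _ => 1)
      = (((c + σ.card).choose σ.card : ℝ) * Y.w σ)⁻¹ * Y.starSum (c + σ.card) f σ := by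
  unfold inner starSum
  rw [mul_sum]
  refine sum_nbij' (σ ∪ ·) (· \ σ) ?_ ?_ ?_ ?_ ?_
  · intro s hs
    simp only [dimFaces, link, mem_filter, mem_powerset, subset_univ, true_and] at hs ⊢
    obtain ⟨⟨hdisj, hmem⟩, hcard⟩ := hs
    refine ⟨⟨union_comm σ s ▸ hmem, ?_⟩, subset_union_left⟩
    rw [card_union_of_disjoint hdisj.symm, hcard, Nat.add_comm]
  · intro τ hτ
    simp only [dimFaces, link, mem_filter, mem_powerset, subset_univ, true_and] at hτ ⊢
    obtain ⟨⟨hmem, hcard⟩, hsub⟩ := hτ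
    refine ⟨⟨sdiff_disjoint, (sdiff_union_of_subset hsub).symm ▸ hmem⟩, ?_⟩
    rw [card_sdiff_of_subset hsub, hcard, Nat.add_sub_cancel]
  · intro s hs
    simp only [dimFaces, link, mem_filter] at hs
    exact union_sdiff_cancel_left hs.1.2.1.symm
  · intro τ hτ
    simp only [mem_filter] at hτ
    exact union_sdiff_of_subset hτ.2
  · intro s hs
    simp only [dimFaces, link, mem_filter] at hs
    simp only [link, hs.2, union_comm s σ]
    ring

end WFam

lemma card_filter_powerset_card_superset {α : Type*} [DecidableEq α] {σ τ : Finset α}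
    (hστ : σ ⊆ τ) {i : ℕ} (hσi : σ.card ≤ i) :
    (τ.powerset.filter (fun ρ => ρ.card = i ∧ σ ⊆ ρ)).card
      = (τ.card - σ.card).choose (i - σ.card) := by
  rw [← card_sdiff_of_subset hστ, ← card_powersetCard (i - σ.card) (τ \ σ)]
  refine card_nbij' (· \ σ) (· ∪ σ) ?_ ?_ ?_ ?_
  · intro ρ hρ
    simp only [mem_coe, mem_filter, mem_powerset, mem_powersetCard] at hρ ⊢
    obtain ⟨hρτ, hcard, hσρ⟩ := hρ
    exact ⟨sdiff_subset_sdiff hρτ subset_rfl, by rw [card_sdiff_of_subset hσρ, hcard]⟩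
  · intro s hs
    simp only [mem_coe, mem_filter, mem_powerset, mem_powersetCard] at hs ⊢
    obtain ⟨hsτ, hcard⟩ := hs
    refine ⟨union_subset (hsτ.trans sdiff_subset) hστ, ?_, subset_union_right⟩
    rw [card_union_of_disjoint (disjoint_of_subset_left hsτ sdiff_disjoint), hcard]
    omega
  · intro ρ hρ
    simp only [mem_coe, mem_filter] at hρ
    exact sdiff_union_of_subset hρ.2.2
  · intro s hs
    simp only [mem_coe, mem_powersetCard] at hs
    exact union_sdiff_cancel_right (disjoint_of_subset_left hs.1 sdiff_disjoint)

namespace WSC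

lemma sum_starSum_superset (X : WSC V d) (c : ℕ) (f : Finset V → ℝ) {σ : Finset V} {i : ℕ}
    (hσi : σ.card ≤ i) :
    ∑ ρ ∈ (X.dimFaces i).filter (σ ⊆ ·), X.starSum c f ρ
      = ((c - σ.card).choose (i - σ.card) : ℝ) * X.starSum c f σ := by
  have hpairs : ∀ ρ τ, ρ ∈ (X.dimFaces i).filter (σ ⊆ ·) ∧ τ ∈ (X.dimFaces c).filter (ρ ⊆ ·) ↔
      ρ ∈ τ.powerset.filter (fun ρ => ρ.card = i ∧ σ ⊆ ρ) ∧
        τ ∈ (X.dimFaces c).filter (σ ⊆ ·) := by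
    intro ρ τ
    simp only [WFam.dimFaces, mem_filter, mem_powerset]
    constructor
    · rintro ⟨⟨⟨-, hρi⟩, hσρ⟩, ⟨hτ, hτc⟩, hρτ⟩
      exact ⟨⟨hρτ, hρi, hσρ⟩, ⟨hτ, hτc⟩, hσρ.trans hρτ⟩
    · rintro ⟨⟨hρτ, hρi, hσρ⟩, ⟨hτ, hτc⟩, -⟩
      exact ⟨⟨⟨X.down_closed hτ hρτ, hρi⟩, hσρ⟩, ⟨hτ, hτc⟩, hρτ⟩
  unfold WFam.starSum
  rw [sum_comm' hpairs, mul_sum]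
  refine sum_congr rfl fun τ hτ => ?_
  simp only [WFam.dimFaces, mem_filter] at hτ
  rw [sum_const, card_filter_powerset_card_superset hτ.2 hσi, hτ.1.2, nsmul_eq_mul]

lemma isLevel_iff_starSum_eq_zero (X : WSC V d) {i c : ℕ} (hic : i ≤ c) (f : Finset V → ℝ) :
    X.isLevel i c f ↔ ∀ ρ ∈ X.dimFaces i, X.starSum c f ρ = 0 := by
  refine forall₂_congr fun ρ hρ => ?_
  simp only [WFam.dimFaces, mem_filter] at hρ
  have hscale : (((c - i + i).choose i : ℝ) * X.w ρ)⁻¹ ≠ 0 :=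
    inv_ne_zero (mul_ne_zero (Nat.cast_ne_zero.mpr (Nat.choose_pos (by omega)).ne')
      (X.w_pos ρ hρ.1).ne')
  rw [WFam.link_inner_one, hρ.2, mul_eq_zero, or_iff_right hscale, Nat.sub_add_cancel hic]

end WSC

theorem isLevel_mono_general (X : WSC V d) (j i k : ℕ) (hji : j ≤ i) (hik : i ≤ k)
    (f : Finset V → ℝ) (hf : X.toWFam.isLevel i (k + 1) f) :
    X.toWFam.isLevel j (k + 1) f := by
  rw [X.isLevel_iff_starSum_eq_zero (by omega)] at hf ⊢
  intro σ hσ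
  have hσj : σ.card = j := (mem_filter.mp hσ).2
  have hcount := X.sum_starSum_superset (k + 1) f (hσj.trans_le hji)
  rw [sum_eq_zero fun ρ hρ => hf ρ (mem_filter.mp hρ).1, eq_comm, mul_eq_zero] at hcount
  exact hcount.resolve_left (Nat.cast_ne_zero.mpr (Nat.choose_pos (by omega)).ne')

/-- For `0 ≤ j ≤ i ≤ k ≤ d`, every `i`-level `k`-cochain with
respect to localization is also a `j`-level cochain: if
`⟨f_σ, 1⟩_{X_σ} = 0` for every `σ ∈ X(i-1)`, then `⟨f_σ, 1⟩_{X_σ} = 0` for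
every `σ ∈ X(j-1)`. -/
theorem isLevel_mono (X : WSC V d) (j i k : ℕ) (hji : j ≤ i) (hik : i ≤ k)
    (hk : k ≤ d) (f : Finset V → ℝ) (hf : X.toWFam.isLevel i (k + 1) f) :
    X.toWFam.isLevel j (k + 1) f :=
  isLevel_mono_general X j i k hji hik f hf

end

end HDRW
end

section
/- Let (X, w) be a weighted pure d-dimensional simplicial complex, k ≤ d, and let 0 ≤ i < j ≤ k. If f ∈ C^k(X; ℝ) is a proper i-level cochain and g ∈ C^k(X; ℝ) is a proper j-level cochain (both with respect to localization), then ⟨f, g⟩ = 0. -/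
/-!
Weighted pure simplicial complexes, links, cochains, signless differentials
and high dimensional random walk operators.

Conventions: faces are `Finset`s of vertices. A cochain "of dimension `k`"
(an element of `C^k(X;ℝ)`) is represented by a function `Finset V → ℝ`
evaluated on faces of **cardinality** `c = k + 1`; all operators are indexed
by cardinality.
-/

open Finset

namespace HDRW

noncomputable section

variable {V : Type*} [DecidableEq V] [Fintype V]

variable {d : ℕ}

private lemma mem_linkDim {Y : WFam V} {τ s : Finset V} {r : ℕ} :
    s ∈ (Y.link τ).dimFaces r ↔ (Disjoint s τ ∧ s ∪ τ ∈ Y.faces) ∧ s.card = r := by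
  simp [WFam.link, WFam.dimFaces]

private lemma inner_link_eq (X : WSC V d) (σ : Finset V) (m c : ℕ) (hm : σ.card = m)
    (hmc : m ≤ c) (g : Finset V → ℝ) :
    (X.toWFam.link σ).inner (c - m) (fun s => g (σ ∪ s)) (fun _ => 1)
      = ((c.choose m : ℝ) * X.w σ)⁻¹ *
        ∑ s ∈ (X.toWFam.link σ).dimFaces (c - m), X.w (s ∪ σ) * g (σ ∪ s) := by
  unfold WFam.inner
  rw [Finset.mul_sum]
  refine Finset.sum_congr rfl fun s hs => ?_
  have hcard : s.card = c - m := (mem_linkDim.mp hs).2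
  show X.w (s ∪ σ) / (((s.card + σ.card).choose σ.card : ℝ) * X.w σ) * _ = _
  rw [hcard, hm, Nat.sub_add_cancel hmc, div_eq_mul_inv]
  ring

private lemma Tsum_eq_zero (X : WSC V d) {j c : ℕ} (hjc : j ≤ c) (g : Finset V → ℝ)
    (hg : X.toWFam.isLevel j c g) {m : ℕ} (hmj : m ≤ j) (σ : Finset V)
    (hσf : σ ∈ X.faces) (hσc : σ.card = m) :
    ∑ s ∈ (X.toWFam.link σ).dimFaces (c - m), X.w (s ∪ σ) * g (σ ∪ s) = 0 := by
  -- first: the top-level sums (at level j) vanish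
  have hT : ∀ τ ∈ X.toWFam.dimFaces j,
      ∑ s' ∈ (X.toWFam.link τ).dimFaces (c - j), X.w (s' ∪ τ) * g (τ ∪ s') = 0 := by
    intro τ hτ
    obtain ⟨hτf, hτc⟩ := Finset.mem_filter.mp hτ
    have h0 := hg τ hτ
    rw [inner_link_eq X τ j c hτc hjc g] at h0
    have hne : ((c.choose j : ℝ) * X.w τ)⁻¹ ≠ 0 := by
      apply inv_ne_zero
      exact mul_ne_zero (by exact_mod_cast (Nat.choose_pos hjc).ne')
        (X.w_pos τ hτf).ne'
    exact (mul_eq_zero.mp h0).resolve_left hne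
  -- the double counting identity
  have key : ((c - m).choose (j - m) : ℝ) *
      ∑ s ∈ (X.toWFam.link σ).dimFaces (c - m), X.w (s ∪ σ) * g (σ ∪ s)
      = ∑ u ∈ (X.toWFam.link σ).dimFaces (j - m),
          ∑ s' ∈ (X.toWFam.link (σ ∪ u)).dimFaces (c - j),
            X.w (s' ∪ (σ ∪ u)) * g ((σ ∪ u) ∪ s') := by
    rw [Finset.mul_sum]
    have hcount : ∀ s ∈ (X.toWFam.link σ).dimFaces (c - m),
        ((c - m).choose (j - m) : ℝ) * (X.w (s ∪ σ) * g (σ ∪ s))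
          = ∑ _u ∈ s.powersetCard (j - m), X.w (s ∪ σ) * g (σ ∪ s) := by
      intro s hs
      rw [Finset.sum_const, Finset.card_powersetCard, (mem_linkDim.mp hs).2,
        nsmul_eq_mul]
    rw [Finset.sum_congr rfl hcount, Finset.sum_sigma', Finset.sum_sigma']
    refine Finset.sum_nbij' (fun p => ⟨p.2, p.1 \ p.2⟩) (fun q => ⟨q.1 ∪ q.2, q.1⟩)
      ?_ ?_ ?_ ?_ ?_
    · rintro ⟨s, u⟩ hp
      obtain ⟨hs, hu⟩ := Finset.mem_sigma.mp hp
      obtain ⟨⟨hsd, hsf⟩, hsc⟩ := mem_linkDim.mp hs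
      obtain ⟨husub, huc⟩ := Finset.mem_powersetCard.mp hu
      refine Finset.mem_sigma.mpr ⟨mem_linkDim.mpr ⟨⟨?_, ?_⟩, huc⟩,
        mem_linkDim.mpr ⟨⟨?_, ?_⟩, ?_⟩⟩
      · exact hsd.mono_left husub
      · exact X.down_closed hsf (Finset.union_subset_union husub le_rfl)
      · refine Finset.disjoint_union_right.mpr ⟨?_, Finset.sdiff_disjoint⟩
        exact hsd.mono_left Finset.sdiff_subset
      · have he : s \ u ∪ (σ ∪ u) = s ∪ σ := by
          ext x
          simp only [Finset.mem_union, Finset.mem_sdiff]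
          have hx := @husub x
          tauto
        rw [he]; exact hsf
      · rw [Finset.card_sdiff_of_subset husub, hsc, huc]
        omega
    · rintro ⟨u, s'⟩ hq
      obtain ⟨hu, hs'⟩ := Finset.mem_sigma.mp hq
      obtain ⟨⟨hud, huf⟩, huc⟩ := mem_linkDim.mp hu
      obtain ⟨⟨hs'd, hs'f⟩, hs'c⟩ := mem_linkDim.mp hs'
      have hds : Disjoint s' u := (Finset.disjoint_union_right.mp hs'd).2
      have hdσ : Disjoint s' σ := (Finset.disjoint_union_right.mp hs'd).1
      refine Finset.mem_sigma.mpr ⟨mem_linkDim.mpr ⟨⟨?_, ?_⟩, ?_⟩,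
        Finset.mem_powersetCard.mpr ⟨Finset.subset_union_left, huc⟩⟩
      · exact Finset.disjoint_union_left.mpr ⟨hud, hdσ⟩
      · have he : u ∪ s' ∪ σ = s' ∪ (σ ∪ u) := by
          ext x
          simp only [Finset.mem_union]
          tauto
        rw [he]; exact hs'f
      · rw [Finset.card_union_of_disjoint hds.symm, huc, hs'c]
        omega
    · rintro ⟨s, u⟩ hp
      obtain ⟨hs, hu⟩ := Finset.mem_sigma.mp hp
      obtain ⟨husub, huc⟩ := Finset.mem_powersetCard.mp hu
      simp [Finset.union_sdiff_of_subset husub]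
    · rintro ⟨u, s'⟩ hq
      obtain ⟨hu, hs'⟩ := Finset.mem_sigma.mp hq
      obtain ⟨⟨hs'd, _⟩, _⟩ := mem_linkDim.mp hs'
      have hds : Disjoint u s' := ((Finset.disjoint_union_right.mp hs'd).2).symm
      simp [Finset.union_sdiff_cancel_left hds]
    · rintro ⟨s, u⟩ hp
      obtain ⟨hs, hu⟩ := Finset.mem_sigma.mp hp
      obtain ⟨husub, huc⟩ := Finset.mem_powersetCard.mp hu
      have h1 : s \ u ∪ (σ ∪ u) = s ∪ σ := by
        ext x
        simp only [Finset.mem_union, Finset.mem_sdiff]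
        have hx := @husub x
        tauto
      have h2 : σ ∪ u ∪ (s \ u) = σ ∪ s := by
        ext x
        simp only [Finset.mem_union, Finset.mem_sdiff]
        have hx := @husub x
        tauto
      rw [h1, h2]
  -- every inner sum in `key` vanishes
  have hz : ∀ u ∈ (X.toWFam.link σ).dimFaces (j - m),
      ∑ s' ∈ (X.toWFam.link (σ ∪ u)).dimFaces (c - j),
        X.w (s' ∪ (σ ∪ u)) * g ((σ ∪ u) ∪ s') = 0 := by
    intro u hu
    obtain ⟨⟨hud, huf⟩, huc⟩ := mem_linkDim.mp hu
    refine hT (σ ∪ u) (Finset.mem_filter.mpr ⟨Finset.mem_coe.mp ?_, ?_⟩)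
    · rw [Finset.union_comm]; exact huf
    · rw [Finset.card_union_of_disjoint hud.symm, hσc, huc]
      omega
  rw [Finset.sum_congr rfl hz, Finset.sum_const_zero] at key
  have hch : ((c - m).choose (j - m) : ℝ) ≠ 0 := by
    exact_mod_cast (Nat.choose_pos (Nat.sub_le_sub_right hjc m)).ne'
  exact (mul_eq_zero.mp key).resolve_left hch

private lemma isLevel_of_le (X : WSC V d) {m j c : ℕ} (hmj : m ≤ j) (hjc : j ≤ c)
    {g : Finset V → ℝ} (hg : X.toWFam.isLevel j c g) : X.toWFam.isLevel m c g := by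
  intro σ hσ
  obtain ⟨hσf, hσc⟩ := Finset.mem_filter.mp hσ
  rw [inner_link_eq X σ m c hσc (hmj.trans hjc) g,
    Tsum_eq_zero X hjc g hg hmj σ hσf hσc, mul_zero]

/-- For `0 ≤ i < j ≤ k ≤ d`, if `f ∈ C^k(X;ℝ)` is a proper
`i`-level cochain and `g ∈ C^k(X;ℝ)` is a proper `j`-level cochain (both with
respect to localization), then `⟨f, g⟩ = 0`. -/
theorem properLevel_orthogonal (X : WSC V d) (i j k : ℕ) (hij : i < j) (hjk : j ≤ k)
    (hk : k ≤ d) (f g : Finset V → ℝ)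
    (hf : X.toWFam.isProperLevel i (k + 1) f)
    (hg : X.toWFam.isProperLevel j (k + 1) g) :
    X.toWFam.inner (k + 1) f g = 0 := by
  exact hf.2 g (isLevel_of_le X hij (hjk.trans (Nat.le_succ k)) hg.1)

end

end HDRW
end
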